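/- Let π : [0,T] → ℝ be differentiable, satisfying π(0) = π₀ ≥ 0 and the equation π'(t) + (1/μ)·(π(t) + ((2−γ)/2)·G(t))² = (γ²/(4μ))·G(t)² on [0,T], where μ > 0, γ > 1, and G : [0,T] → ℝ is continuous. Then 0 ≤ π(t) ≤ π₀ + (γ²/(4μ))·∫₀ᵗ G(τ)² dτ for all t ∈ [0,T]. -/

import Mathlib

open Set intervalIntegral

/-!
Expanding the square, the pressure equation reads `π' + a π = ((γ - 1)/μ) G²` with the
continuous coefficient `a = (π + (2 - γ) G)/μ`. The right-hand side is nonnegative, so with a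
primitive `A` of `a` the function `π e^A` is nondecreasing, which gives `π ≥ 0`. Dropping the
nonnegative square gives `π' ≤ (γ²/(4μ)) G²`, and integrating gives the upper bound.
-/

theorem exists_forall_hasDerivAt_of_continuousOn_Icc {c : ℝ → ℝ} {a b : ℝ} (hab : a ≤ b)
    (hc : ContinuousOn c (Icc a b)) :
    ∃ C : ℝ → ℝ, ∀ t ∈ Icc a b, HasDerivAt C (c t) t := by
  have hcont : Continuous (fun s => c (projIcc a b hab s)) :=
    hc.comp_continuous (continuous_subtype_val.comp continuous_projIcc) fun s =>
      (projIcc a b hab s).2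
  refine ⟨fun t => ∫ s in a..t, c (projIcc a b hab s), fun t ht => ?_⟩
  have hderiv := integral_hasDerivAt_right (hcont.intervalIntegrable a t)
    (hcont.stronglyMeasurableAtFilter _ _) hcont.continuousAt
  rwa [projIcc_of_mem hab ht] at hderiv

theorem nonneg_of_hasDerivAt_add_mul_nonneg {f f' c : ℝ → ℝ} {a b : ℝ}
    (hc : ContinuousOn c (Icc a b)) (hf : ∀ t ∈ Icc a b, HasDerivAt f (f' t) t)
    (hineq : ∀ t ∈ Icc a b, 0 ≤ f' t + c t * f t) (ha : 0 ≤ f a) :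
    ∀ t ∈ Icc a b, 0 ≤ f t := by
  intro t ht
  have hab : a ≤ b := ht.1.trans ht.2
  obtain ⟨C, hC⟩ := exists_forall_hasDerivAt_of_continuousOn_Icc hab hc
  set q : ℝ → ℝ := fun s => f s * Real.exp (C s - C a)
  have hq : ∀ s ∈ Icc a b, HasDerivAt q ((f' s + c s * f s) * Real.exp (C s - C a)) s :=
    fun s hs => ((hf s hs).mul ((hC s hs).sub_const (C a)).exp).congr_deriv (by ring)
  have hmono : MonotoneOn q (Icc a b) :=
    monotoneOn_of_hasDerivWithinAt_nonneg (convex_Icc a b)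
      (fun s hs => (hq s hs).continuousAt.continuousWithinAt)
      (fun s hs => (hq s (interior_subset hs)).hasDerivWithinAt)
      (fun s hs => mul_nonneg (hineq s (interior_subset hs)) (Real.exp_pos _).le)
  have hqt : f a ≤ q t := by
    simpa [q] using hmono (left_mem_Icc.2 hab) ht ht.1
  exact nonneg_of_mul_nonneg_left (ha.trans hqt) (Real.exp_pos _)

theorem le_add_integral_of_hasDerivAt_le {f f' g : ℝ → ℝ} {a b : ℝ}
    (hg : ContinuousOn g (Icc a b)) (hf : ∀ t ∈ Icc a b, HasDerivAt f (f' t) t)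
    (hle : ∀ t ∈ Icc a b, f' t ≤ g t) :
    ∀ t ∈ Icc a b, f t ≤ f a + ∫ s in a..t, g s := by
  intro t ht
  have hsub : Icc a t ⊆ Icc a b := Icc_subset_Icc_right ht.2
  have := sub_le_integral_of_hasDeriv_right_of_le ht.1
    (fun s hs => (hf s (hsub hs)).continuousAt.continuousWithinAt)
    (fun s hs => (hf s (hsub (Ioo_subset_Icc_self hs))).hasDerivWithinAt)
    ((hg.mono hsub).integrableOn_Icc)
    (fun s hs => hle s (hsub (Ioo_subset_Icc_self hs)))
  linarith

theorem pressure_quadratic_sub_source_eq (μ γ p G : ℝ) :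
    (1 / μ) * (p + ((2 - γ) / 2) * G) ^ 2 - (γ ^ 2 / (4 * μ)) * G ^ 2
      = (p + (2 - γ) * G) / μ * p - ((γ - 1) / μ) * G ^ 2 := by
  ring

theorem stmt6_general (p p' G : ℝ → ℝ) (μ γ T p₀ : ℝ) (hμ : 0 < μ) (hγ : 1 < γ)
    (hp0 : p 0 = p₀) (hp₀ : 0 ≤ p₀) (hG : Continuous G)
    (hderiv : ∀ t ∈ Icc 0 T, HasDerivAt p (p' t) t)
    (heq : ∀ t ∈ Icc 0 T,
      p' t + (1 / μ) * (p t + ((2 - γ) / 2) * G t) ^ 2 = (γ ^ 2 / (4 * μ)) * (G t) ^ 2) :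
    ∀ t ∈ Icc 0 T,
      0 ≤ p t ∧ p t ≤ p₀ + (γ ^ 2 / (4 * μ)) * ∫ τ in (0 : ℝ)..t, (G τ) ^ 2 := by
  have hp : ContinuousOn p (Icc 0 T) := fun t ht =>
    (hderiv t ht).continuousAt.continuousWithinAt
  have hlinear : ∀ t ∈ Icc 0 T,
      0 ≤ p' t + (p t + (2 - γ) * G t) / μ * p t := by
    intro t ht
    have hsource : 0 ≤ ((γ - 1) / μ) * G t ^ 2 := by
      have : 0 < γ - 1 := by linarith
      positivity
    linarith [heq t ht, pressure_quadratic_sub_source_eq μ γ (p t) (G t)]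
  have hquadratic : ∀ t ∈ Icc 0 T, p' t ≤ (γ ^ 2 / (4 * μ)) * G t ^ 2 := by
    intro t ht
    have : 0 ≤ (1 / μ) * (p t + ((2 - γ) / 2) * G t) ^ 2 := by positivity
    linarith [heq t ht]
  have hcoeff : ContinuousOn (fun t => (p t + (2 - γ) * G t) / μ) (Icc 0 T) := by fun_prop
  intro t ht
  refine ⟨nonneg_of_hasDerivAt_add_mul_nonneg hcoeff hderiv hlinear (hp0 ▸ hp₀) t ht, ?_⟩
  have hupper := le_add_integral_of_hasDerivAt_le (g := fun τ => γ ^ 2 / (4 * μ) * G τ ^ 2)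
    (by fun_prop) hderiv hquadratic t ht
  rwa [integral_const_mul, hp0] at hupper

/-- Pointwise pressure estimate: if
`π' + (1/μ)(π + ((2−γ)/2)G)² = (γ²/(4μ))G²` with `π(0) = π₀ ≥ 0`, then
`0 ≤ π(t) ≤ π₀ + (γ²/(4μ))∫₀ᵗ G²`. -/
theorem stmt6 (p p' G : ℝ → ℝ) (μ γ T p₀ : ℝ) (hμ : 0 < μ) (hγ : 1 < γ)
    (hT : 0 < T) (hp0 : p 0 = p₀) (hp₀ : 0 ≤ p₀) (hG : Continuous G)
    (hderiv : ∀ t ∈ Icc 0 T, HasDerivAt p (p' t) t)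
    (heq : ∀ t ∈ Icc 0 T,
      p' t + (1 / μ) * (p t + ((2 - γ) / 2) * G t) ^ 2 = (γ ^ 2 / (4 * μ)) * (G t) ^ 2) :
    ∀ t ∈ Icc 0 T,
      0 ≤ p t ∧ p t ≤ p₀ + (γ ^ 2 / (4 * μ)) * ∫ τ in (0 : ℝ)..t, (G τ) ^ 2 :=
  stmt6_general p p' G μ γ T p₀ hμ hγ hp0 hp₀ hG hderiv heq
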